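/- arXiv:1710.08097 — 2 statements merged into one kernel-verified Lean document; each statement's English description precedes it below -/
import Mathlib

section
/- The function u defined piecewise by u(x) = −4x²−4x−1 on [−1,−1/2], 0 on [−1/2,1/2], 4x²−4x+1 on [1/2,1] satisfies −u'' + 8·sign(u) = 0 in the weak sense: for every smooth test function η with η(±1) = 0, ∫_{−1}^{1} u'η' dx + 8∫_{−1}^{1} s η dx = 0, where s(x) = −1 on (−1,−1/2), s(x) = 0 on (−1/2,1/2), s(x) = 1 on (1/2,1); moreover s(x) ∈ ∂|·|(u(x)) pointwise. -/
open MeasureTheory intervalIntegral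

/-- Exact solution of the 1D two-phase obstacle problem. -/
noncomputable def uTP (x : ℝ) : ℝ :=
  if x ≤ -(1/2) then -4*x^2 - 4*x - 1
  else if x ≤ 1/2 then 0
  else 4*x^2 - 4*x + 1

/-- The selection `s ∈ ∂|·|(u)` : `−1` on `(−1,−1/2)`, `0` on `(−1/2,1/2)`, `1` on `(1/2,1)`. -/
noncomputable def sTP (x : ℝ) : ℝ :=
  if x ≤ -(1/2) then -1
  else if x ≤ 1/2 then 0
  else 1

noncomputable def vTP (x : ℝ) : ℝ :=
  if x ≤ -(1/2) then -8*x - 4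
  else if x ≤ 1/2 then 0
  else 8*x - 4

lemma uTP_l {x : ℝ} (h : x ≤ -(1/2)) : uTP x = -4*x^2 - 4*x - 1 := by rw [uTP, if_pos h]
lemma uTP_m {x : ℝ} (h1 : ¬ x ≤ -(1/2)) (h2 : x ≤ 1/2) : uTP x = 0 := by
  rw [uTP, if_neg h1, if_pos h2]
lemma uTP_r {x : ℝ} (h1 : ¬ x ≤ -(1/2)) (h2 : ¬ x ≤ 1/2) : uTP x = 4*x^2 - 4*x + 1 := by
  rw [uTP, if_neg h1, if_neg h2]
lemma vTP_l {x : ℝ} (h : x ≤ -(1/2)) : vTP x = -8*x - 4 := by rw [vTP, if_pos h]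
lemma vTP_m {x : ℝ} (h1 : ¬ x ≤ -(1/2)) (h2 : x ≤ 1/2) : vTP x = 0 := by
  rw [vTP, if_neg h1, if_pos h2]
lemma vTP_r {x : ℝ} (h1 : ¬ x ≤ -(1/2)) (h2 : ¬ x ≤ 1/2) : vTP x = 8*x - 4 := by
  rw [vTP, if_neg h1, if_neg h2]
lemma sTP_l {x : ℝ} (h : x ≤ -(1/2)) : sTP x = -1 := by rw [sTP, if_pos h]
lemma sTP_m {x : ℝ} (h1 : ¬ x ≤ -(1/2)) (h2 : x ≤ 1/2) : sTP x = 0 := by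
  rw [sTP, if_neg h1, if_pos h2]
lemma sTP_r {x : ℝ} (h1 : ¬ x ≤ -(1/2)) (h2 : ¬ x ≤ 1/2) : sTP x = 1 := by
  rw [sTP, if_neg h1, if_neg h2]

lemma hd1 (x : ℝ) : HasDerivAt (fun x : ℝ => -4*x^2 - 4*x - 1) (-8*x - 4) x := by
  have h : HasDerivAt (fun x : ℝ => -4*x^2 - 4*x - 1)
      (-4*(2*x^(2-1)) - 4*1 - 0) x :=
    (((hasDerivAt_pow 2 x).const_mul (-4)).sub ((hasDerivAt_id x).const_mul 4)).sub
      (hasDerivAt_const x 1)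
  convert h using 1; ring

lemma hd3 (x : ℝ) : HasDerivAt (fun x : ℝ => 4*x^2 - 4*x + 1) (8*x - 4) x := by
  have h : HasDerivAt (fun x : ℝ => 4*x^2 - 4*x + 1)
      (4*(2*x^(2-1)) - 4*1 + 0) x :=
    (((hasDerivAt_pow 2 x).const_mul 4).sub ((hasDerivAt_id x).const_mul 4)).add
      (hasDerivAt_const x 1)
  convert h using 1; ring

lemma uTP_hasDeriv (x : ℝ) : HasDerivAt uTP (vTP x) x := by
  rcases lt_trichotomy x (-(1/2)) with h | h | h
  · have he : (fun x : ℝ => -4*x^2 - 4*x - 1) =ᶠ[nhds x] uTP := by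
      filter_upwards [Iio_mem_nhds h] with y hy
      exact (uTP_l (le_of_lt hy)).symm
    rw [vTP_l h.le]
    exact (hd1 x).congr_of_eventuallyEq he.symm
  · subst h
    have e0 : uTP (-(1/2) : ℝ) = 0 := by rw [uTP_l le_rfl]; norm_num
    have hleft : HasDerivWithinAt uTP 0 (Set.Iic (-(1/2) : ℝ)) (-(1/2)) := by
      have h1 : HasDerivWithinAt (fun x : ℝ => -4*x^2 - 4*x - 1)
          (-8*(-(1/2)) - 4) (Set.Iic (-(1/2))) (-(1/2)) := (hd1 _).hasDerivWithinAt
      have h0 : (-8*(-(1/2) : ℝ) - 4) = 0 := by norm_num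
      rw [h0] at h1
      exact h1.congr (fun y hy => uTP_l hy) (uTP_l le_rfl)
    have hright : HasDerivWithinAt uTP 0 (Set.Ici (-(1/2) : ℝ)) (-(1/2)) := by
      have h1 : HasDerivWithinAt (fun _ : ℝ => (0:ℝ)) 0
          (Set.Icc (-(1/2) : ℝ) (1/2)) (-(1/2)) :=
        (hasDerivAt_const _ 0).hasDerivWithinAt
      have h2 : HasDerivWithinAt uTP 0 (Set.Icc (-(1/2) : ℝ) (1/2)) (-(1/2)) := by
        refine h1.congr (fun y hy => ?_) e0
        rcases eq_or_lt_of_le hy.1 with h' | h'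
        · rw [← h']; exact e0
        · exact uTP_m (not_le.mpr h') hy.2
      exact h2.mono_of_mem_nhdsWithin (Icc_mem_nhdsGE (by norm_num))
    have huniv := hleft.union hright
    rw [Set.Iic_union_Ici] at huniv
    rw [show vTP (-(1/2) : ℝ) = 0 from by rw [vTP_l le_rfl]; norm_num]
    exact hasDerivWithinAt_univ.mp huniv
  · rcases lt_trichotomy x (1/2) with h2 | h2 | h2
    · have he : (fun _ : ℝ => (0:ℝ)) =ᶠ[nhds x] uTP := by
        filter_upwards [Ioo_mem_nhds h h2] with y hy
        exact (uTP_m (not_le.mpr hy.1) hy.2.le).symm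
      rw [vTP_m (not_le.mpr h) h2.le]
      exact (hasDerivAt_const x 0).congr_of_eventuallyEq he.symm
    · subst h2
      have e0 : uTP (1/2 : ℝ) = 0 := uTP_m (by norm_num) le_rfl
      have hleft : HasDerivWithinAt uTP 0 (Set.Iic (1/2 : ℝ)) (1/2) := by
        have h1 : HasDerivWithinAt (fun _ : ℝ => (0:ℝ)) 0
            (Set.Icc (-(1/2) : ℝ) (1/2)) (1/2) :=
          (hasDerivAt_const _ 0).hasDerivWithinAt
        have h2 : HasDerivWithinAt uTP 0 (Set.Icc (-(1/2) : ℝ) (1/2)) (1/2) := by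
          refine h1.congr (fun y hy => ?_) e0
          rcases eq_or_lt_of_le hy.1 with h' | h'
          · rw [← h', uTP_l le_rfl]; norm_num
          · exact uTP_m (not_le.mpr h') hy.2
        exact h2.mono_of_mem_nhdsWithin (Icc_mem_nhdsLE (by norm_num))
      have hright : HasDerivWithinAt uTP 0 (Set.Ici (1/2 : ℝ)) (1/2) := by
        have h1 : HasDerivWithinAt (fun x : ℝ => 4*x^2 - 4*x + 1)
            (8*(1/2) - 4) (Set.Ici (1/2 : ℝ)) (1/2) := (hd3 _).hasDerivWithinAt
        have h0 : (8*(1/2 : ℝ) - 4) = 0 := by norm_num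
        rw [h0] at h1
        refine h1.congr (fun y hy => ?_) (by rw [e0]; norm_num)
        rcases eq_or_lt_of_le (Set.mem_Ici.mp hy) with h' | h'
        · rw [← h', e0]; norm_num
        · exact uTP_r (by push_neg; linarith) (not_le.mpr h')
      have huniv := hleft.union hright
      rw [Set.Iic_union_Ici] at huniv
      rw [show vTP (1/2 : ℝ) = 0 from vTP_m (by norm_num) le_rfl]
      exact hasDerivWithinAt_univ.mp huniv
    · have he : (fun x : ℝ => 4*x^2 - 4*x + 1) =ᶠ[nhds x] uTP := by
        filter_upwards [Ioi_mem_nhds h2] with y hy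
        exact (uTP_r (by push_neg; linarith [Set.mem_Ioi.mp hy]) (not_le.mpr hy)).symm
      rw [vTP_r (by push_neg; linarith) (not_le.mpr h2)]
      exact (hd3 x).congr_of_eventuallyEq he.symm

lemma vTP_cont : Continuous vTP := by
  unfold vTP
  refine Continuous.if_le (by fun_prop) ?_ continuous_id continuous_const ?_
  · refine Continuous.if_le continuous_const (by fun_prop) continuous_id continuous_const ?_
    intro x hx; rw [hx]; norm_num
  · intro x hx
    rw [hx]; norm_num

lemma hdlin1 (x : ℝ) : HasDerivAt (fun x : ℝ => -8*x - 4) (-8) x := by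
  have := ((hasDerivAt_id x).const_mul (-8)).sub_const 4
  simpa using this

lemma hdlin3 (x : ℝ) : HasDerivAt (fun x : ℝ => 8*x - 4) (8) x := by
  have := ((hasDerivAt_id x).const_mul 8).sub_const 4
  simpa using this

/-- `uTP` satisfies `−u'' + 8·sign(u) = 0` in the weak sense: for every smooth test
function `η` vanishing at `±1`, `∫ u'η' + 8∫ s η = 0`; moreover `s(x) ∈ ∂|·|(u(x))`
pointwise (i.e. `|s| ≤ 1` and `s·u = |u|`). -/
theorem two_phase_1d_euler_lagrange :
    (∀ η : ℝ → ℝ, ContDiff ℝ (⊤ : ℕ∞) η → η (-1) = 0 → η 1 = 0 →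
      (∫ x in (-1:ℝ)..1, deriv uTP x * deriv η x) + 8 * (∫ x in (-1:ℝ)..1, sTP x * η x) = 0) ∧
    (∀ x : ℝ, |sTP x| ≤ 1 ∧ sTP x * uTP x = |uTP x|) := by
  constructor
  · intro η hη hm hp
    have hηc : Continuous η := hη.continuous
    have hη' : Continuous (deriv η) := hη.continuous_deriv (by simp)
    have hder : ∀ x, HasDerivAt η (deriv η x) x :=
      fun x => (hη.differentiable (by simp) x).hasDerivAt
    have hdu : deriv uTP = vTP := funext fun x => (uTP_hasDeriv x).deriv
    rw [hdu]
    have hint : ∀ a b : ℝ, IntervalIntegrable (fun x => vTP x * deriv η x) volume a b :=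
      fun a b => (vTP_cont.mul hη').intervalIntegrable a b
    -- integrability of sTP * η on the three pieces
    have hs1 : IntervalIntegrable (fun x => sTP x * η x) volume (-1) (-(1/2)) := by
      refine ((hηc.neg).intervalIntegrable _ _).congr_ae ?_
      refine (ae_restrict_of_forall_mem measurableSet_uIoc fun x hx => ?_)
      rw [Set.uIoc_of_le (by norm_num : (-1:ℝ) ≤ -(1/2))] at hx
      show -η x = sTP x * η x
      rw [sTP_l hx.2]; ring
    have hs2 : IntervalIntegrable (fun x => sTP x * η x) volume (-(1/2)) (1/2) := by
      refine (_root_.intervalIntegrable_const (c := (0:ℝ))).congr_ae ?_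
      refine (ae_restrict_of_forall_mem measurableSet_uIoc fun x hx => ?_)
      rw [Set.uIoc_of_le (by norm_num : (-(1/2):ℝ) ≤ 1/2)] at hx
      show (0:ℝ) = sTP x * η x
      rw [sTP_m (not_le.mpr hx.1) hx.2]; ring
    have hs3 : IntervalIntegrable (fun x => sTP x * η x) volume (1/2) 1 := by
      refine (hηc.intervalIntegrable _ _).congr_ae ?_
      refine (ae_restrict_of_forall_mem measurableSet_uIoc fun x hx => ?_)
      rw [Set.uIoc_of_le (by norm_num : (1/2:ℝ) ≤ 1)] at hx
      show η x = sTP x * η x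
      rw [sTP_r (by push_neg; linarith [hx.1]) (not_le.mpr hx.1)]; ring
    -- split the integrals
    rw [← integral_add_adjacent_intervals (hint (-1) (-(1/2))) (hint (-(1/2)) 1),
        ← integral_add_adjacent_intervals (hint (-(1/2)) (1/2)) (hint (1/2) 1),
        ← integral_add_adjacent_intervals hs1 (hs2.trans hs3),
        ← integral_add_adjacent_intervals hs2 hs3]
    -- compute u' pieces
    have I1 : (∫ x in (-1:ℝ)..(-(1/2)), vTP x * deriv η x)
        = 8 * ∫ x in (-1:ℝ)..(-(1/2)), η x := by
      have hcong : (∫ x in (-1:ℝ)..(-(1/2)), vTP x * deriv η x)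
          = ∫ x in (-1:ℝ)..(-(1/2)), (-8*x - 4) * deriv η x := by
        refine integral_congr_ae (ae_of_all _ fun x hx => ?_)
        rw [Set.uIoc_of_le (by norm_num : (-1:ℝ) ≤ -(1/2))] at hx
        rw [vTP_l hx.2]
      rw [hcong, integral_mul_deriv_eq_deriv_mul (u' := fun _ => (-8:ℝ))
        (fun x _ => hdlin1 x) (fun x _ => hder x)
        (_root_.intervalIntegrable_const) (hη'.intervalIntegrable _ _)]
      rw [intervalIntegral.integral_const_mul]
      rw [hm]; ring_nf
    have I2 : (∫ x in (-(1/2):ℝ)..(1/2), vTP x * deriv η x) = 0 := by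
      have hcong : (∫ x in (-(1/2):ℝ)..(1/2), vTP x * deriv η x)
          = ∫ x in (-(1/2):ℝ)..(1/2), (0:ℝ) := by
        refine integral_congr_ae (ae_of_all _ fun x hx => ?_)
        rw [Set.uIoc_of_le (by norm_num : (-(1/2):ℝ) ≤ 1/2)] at hx
        rw [vTP_m (not_le.mpr hx.1) hx.2]; ring
      rw [hcong]; simp
    have I3 : (∫ x in (1/2:ℝ)..1, vTP x * deriv η x)
        = -8 * ∫ x in (1/2:ℝ)..1, η x := by
      have hcong : (∫ x in (1/2:ℝ)..1, vTP x * deriv η x)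
          = ∫ x in (1/2:ℝ)..1, (8*x - 4) * deriv η x := by
        refine integral_congr_ae (ae_of_all _ fun x hx => ?_)
        rw [Set.uIoc_of_le (by norm_num : (1/2:ℝ) ≤ 1)] at hx
        rw [vTP_r (by push_neg; linarith [hx.1]) (not_le.mpr hx.1)]
      rw [hcong, integral_mul_deriv_eq_deriv_mul (u' := fun _ => (8:ℝ))
        (fun x _ => hdlin3 x) (fun x _ => hder x)
        (_root_.intervalIntegrable_const) (hη'.intervalIntegrable _ _)]
      rw [intervalIntegral.integral_const_mul]
      rw [hp]; ring_nf
    -- compute s pieces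
    have S1 : (∫ x in (-1:ℝ)..(-(1/2)), sTP x * η x)
        = -∫ x in (-1:ℝ)..(-(1/2)), η x := by
      rw [← intervalIntegral.integral_neg]
      refine integral_congr_ae (ae_of_all _ fun x hx => ?_)
      rw [Set.uIoc_of_le (by norm_num : (-1:ℝ) ≤ -(1/2))] at hx
      rw [sTP_l hx.2]; ring
    have S2 : (∫ x in (-(1/2):ℝ)..(1/2), sTP x * η x) = 0 := by
      have hcong : (∫ x in (-(1/2):ℝ)..(1/2), sTP x * η x)
          = ∫ x in (-(1/2):ℝ)..(1/2), (0:ℝ) := by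
        refine integral_congr_ae (ae_of_all _ fun x hx => ?_)
        rw [Set.uIoc_of_le (by norm_num : (-(1/2):ℝ) ≤ 1/2)] at hx
        rw [sTP_m (not_le.mpr hx.1) hx.2]; ring
      rw [hcong]; simp
    have S3 : (∫ x in (1/2:ℝ)..1, sTP x * η x) = ∫ x in (1/2:ℝ)..1, η x := by
      refine integral_congr_ae (ae_of_all _ fun x hx => ?_)
      rw [Set.uIoc_of_le (by norm_num : (1/2:ℝ) ≤ 1)] at hx
      rw [sTP_r (by push_neg; linarith [hx.1]) (not_le.mpr hx.1)]; ring
    rw [I1, I2, I3, S1, S2, S3]; ring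
  · intro x
    rcases le_or_gt x (-(1/2)) with h | h
    · rw [sTP_l h, uTP_l h]
      constructor
      · norm_num
      · rw [abs_of_nonpos (by nlinarith)]; ring
    · rcases le_or_gt x (1/2) with h2 | h2
      · rw [sTP_m (not_le.mpr h) h2, uTP_m (not_le.mpr h) h2]
        simp
      · rw [sTP_r (not_le.mpr (by linarith)) (not_le.mpr h2),
            uTP_r (not_le.mpr (by linarith)) (not_le.mpr h2)]
        constructor
        · norm_num
        · rw [abs_of_nonneg (by nlinarith)]; ring
end

section
/- For the 1D two-phase example, if N = 4k+1 for some k ∈ ℕ, then the piecewise linear nodal interpolant v_N = I_N(u) on N uniformly spaced nodes in [−1,1] satisfies {v_N < 0} = {u < 0}, {v_N = 0} = {u = 0}, {v_N > 0} = {u > 0}, and hence μ_ω(v_N) = 0. -/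
open MeasureTheory

/-- Piecewise linear nodal interpolant of `uTP` on `N` uniformly spaced nodes
`x_j = −1 + j·h`, `h = 2/(N−1)`, in `[−1,1]`. -/
noncomputable def vInterp (N : ℕ) (x : ℝ) : ℝ :=
  let h : ℝ := 2 / (N - 1)
  let j : ℤ := ⌊(x + 1) / h⌋
  let xj : ℝ := -1 + j * h
  uTP xj + (uTP (xj + h) - uTP xj) * (x - xj) / h

/-!
With `h = 1/(2k)` the points `±1/2` are grid nodes, so every grid cell lies in one of
`(-∞, -1/2]`, `[-1/2, 1/2]`, `[1/2, ∞)`. On the left, `u` is concave and negative, so the chord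
lies below `u` and `v_N < 0`; on the right, `u` is convex, so the chord lies above `u` and
`v_N > 0` wherever `u > 0`; on the middle cells both nodal values vanish. Hence `v_N` and `u` have
the same sign everywhere, and the sets over which `μ_ω(v_N)` integrates are empty.
-/

open Set

noncomputable def gridNode (c h x : ℝ) : ℝ := c + ⌊(x - c) / h⌋ * h

noncomputable def linInterp (f : ℝ → ℝ) (a h x : ℝ) : ℝ :=
  f a + (f (a + h) - f a) * (x - a) / h

section Grid

variable {c h x : ℝ}

theorem gridNode_le (hh : 0 < h) : gridNode c h x ≤ x := by
  have := (le_div_iff₀ hh).1 (Int.floor_le ((x - c) / h))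
  unfold gridNode; linarith

theorem lt_gridNode_add (hh : 0 < h) : x < gridNode c h x + h := by
  have := (div_lt_iff₀ hh).1 (Int.lt_floor_add_one ((x - c) / h))
  unfold gridNode; linarith

theorem gridNode_add_le_of_lt (hh : 0 < h) {m : ℤ} (hx : x < c + m * h) :
    gridNode c h x + h ≤ c + m * h := by
  have hlt : ⌊(x - c) / h⌋ < m := Int.floor_lt.2 <| (div_lt_iff₀ hh).2 (by linarith)
  have : ((⌊(x - c) / h⌋ + 1 : ℤ) : ℝ) * h ≤ m * h := by
    gcongr; exact Int.add_one_le_of_lt hlt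
  push_cast at this
  unfold gridNode; linarith

theorem le_gridNode_of_le (hh : 0 < h) {m : ℤ} (hx : c + m * h ≤ x) :
    c + m * h ≤ gridNode c h x := by
  have hle : m ≤ ⌊(x - c) / h⌋ := Int.le_floor.2 <| (le_div_iff₀ hh).2 (by linarith)
  have : (m : ℝ) * h ≤ ⌊(x - c) / h⌋ * h := by gcongr
  unfold gridNode; linarith

end Grid

section LinInterp

variable {f : ℝ → ℝ} {s : Set ℝ} {a h x : ℝ}

@[simp]
theorem linInterp_self : linInterp f a h a = f a := by simp [linInterp]

theorem linInterp_eq_zero (ha : f a = 0) (hah : f (a + h) = 0) : linInterp f a h x = 0 := by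
  simp [linInterp, ha, hah]

theorem le_linInterp_of_convexOn (hf : ConvexOn ℝ s f) (ha : a ∈ s) (hah : a + h ∈ s)
    (hh : 0 < h) (hax : a ≤ x) (hxa : x ≤ a + h) : f x ≤ linInterp f a h x := by
  set t := (x - a) / h
  have ht0 : 0 ≤ t := div_nonneg (by linarith) hh.le
  have ht1 : 0 ≤ 1 - t := by rw [sub_nonneg, div_le_one hh]; linarith
  have hx : (1 - t) • a + t • (a + h) = x := by simp only [t, smul_eq_mul]; field_simp; ring
  have := hf.2 ha hah ht1 ht0 (by ring)
  rw [hx, smul_eq_mul, smul_eq_mul] at this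
  calc f x ≤ (1 - t) * f a + t * f (a + h) := this
    _ = linInterp f a h x := by simp only [linInterp, t]; ring

theorem linInterp_le_of_concaveOn (hf : ConcaveOn ℝ s f) (ha : a ∈ s) (hah : a + h ∈ s)
    (hh : 0 < h) (hax : a ≤ x) (hxa : x ≤ a + h) : linInterp f a h x ≤ f x := by
  have hneg : linInterp (-f) a h x = -linInterp f a h x := by
    simp only [linInterp, Pi.neg_apply]; ring
  have := le_linInterp_of_convexOn hf.neg ha hah hh hax hxa
  rw [hneg, Pi.neg_apply] at this
  linarith

end LinInterp

theorem sep_inter_sep_eq_empty {α : Type*} {s : Set α} {p q : α → Prop}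
    (h : ∀ x ∈ s, p x → ¬q x) : {x ∈ s | p x} ∩ {x ∈ s | q x} = ∅ :=
  eq_empty_of_forall_notMem fun x hx => h x hx.1.1 hx.1.2 hx.2.2

theorem uTP_eq_of_le_neg_half {x : ℝ} (hx : x ≤ -(1/2)) : uTP x = -(2 * x + 1) ^ 2 := by
  rw [uTP, if_pos hx]; ring

theorem uTP_eq_zero_of_mem_Icc {x : ℝ} (hx : x ∈ Icc (-(1/2)) (1/2)) : uTP x = 0 := by
  rcases eq_or_lt_of_le hx.1 with rfl | h
  · norm_num [uTP]
  · rw [uTP, if_neg (not_le.2 h), if_pos hx.2]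

theorem uTP_eq_of_half_le {x : ℝ} (hx : 1/2 ≤ x) : uTP x = (2 * x - 1) ^ 2 := by
  rcases eq_or_lt_of_le hx with rfl | h
  · norm_num [uTP]
  · rw [uTP, if_neg (by linarith), if_neg (not_le.2 h)]; ring

theorem uTP_neg_of_lt_neg_half {x : ℝ} (hx : x < -(1/2)) : uTP x < 0 := by
  rw [uTP_eq_of_le_neg_half hx.le]; nlinarith

theorem uTP_pos_of_half_lt {x : ℝ} (hx : 1/2 < x) : 0 < uTP x := by
  rw [uTP_eq_of_half_le hx.le]; nlinarith

theorem concaveOn_uTP_Iic : ConcaveOn ℝ (Iic (-(1/2))) uTP := by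
  refine ⟨convex_Iic _, fun x hx y hy a b ha hb hab => ?_⟩
  rw [uTP_eq_of_le_neg_half hx, uTP_eq_of_le_neg_half hy,
    uTP_eq_of_le_neg_half (convex_Iic _ hx hy ha hb hab)]
  simp only [smul_eq_mul]
  obtain rfl : b = 1 - a := by linarith
  nlinarith [mul_nonneg ha hb, sq_nonneg (x - y)]

theorem convexOn_uTP_Ici : ConvexOn ℝ (Ici (1/2)) uTP := by
  refine ⟨convex_Ici _, fun x hx y hy a b ha hb hab => ?_⟩
  rw [uTP_eq_of_half_le hx, uTP_eq_of_half_le hy,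
    uTP_eq_of_half_le (convex_Ici _ hx hy ha hb hab)]
  simp only [smul_eq_mul]
  obtain rfl : b = 1 - a := by linarith
  nlinarith [mul_nonneg ha hb, sq_nonneg (x - y)]

theorem vInterp_eq_linInterp (k : ℕ) (x : ℝ) :
    vInterp (4 * k + 1) x = linInterp uTP (gridNode (-1) (1 / (2 * k)) x) (1 / (2 * k)) x := by
  have hh : (2 : ℝ) / ((4 * k + 1 : ℕ) - 1) = 1 / (2 * k) := by
    push_cast; ring
  simp only [vInterp, linInterp, gridNode, hh, sub_neg_eq_add]

theorem sign_vInterp {k : ℕ} (hk : 0 < k) (x : ℝ) :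
    SignType.sign (vInterp (4 * k + 1) x) = SignType.sign (uTP x) := by
  set h : ℝ := 1 / (2 * k) with h_def
  have hh : 0 < h := by positivity
  have hlo : -1 + ((k : ℤ) : ℝ) * h = -(1/2) := by
    rw [h_def]; push_cast; field_simp; ring
  have hhi : -1 + (((3 * k : ℕ) : ℤ) : ℝ) * h = 1/2 := by
    rw [h_def]; push_cast; field_simp; ring
  rw [vInterp_eq_linInterp]
  set a := gridNode (-1) h x
  have hax : a ≤ x := gridNode_le hh
  have hxa : x < a + h := lt_gridNode_add hh
  rcases lt_or_ge x (-(1/2)) with hx | hx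
  · have hah : a + h ≤ -(1/2) := hlo ▸ gridNode_add_le_of_lt hh (hlo.symm ▸ hx)
    have hle : linInterp uTP a h x ≤ uTP x :=
      linInterp_le_of_concaveOn concaveOn_uTP_Iic (mem_Iic.2 (by linarith)) hah hh hax hxa.le
    have hu := uTP_neg_of_lt_neg_half hx
    rw [sign_neg hu, sign_neg (hle.trans_lt hu)]
  have ha : -(1/2) ≤ a := hlo ▸ le_gridNode_of_le hh (hlo.symm ▸ hx)
  rcases lt_or_ge x (1/2) with hx' | hx'
  · have hah : a + h ≤ 1/2 := hhi ▸ gridNode_add_le_of_lt hh (hhi.symm ▸ hx')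
    rw [uTP_eq_zero_of_mem_Icc ⟨hx, hx'.le⟩, linInterp_eq_zero
      (uTP_eq_zero_of_mem_Icc ⟨ha, by linarith⟩)
      (uTP_eq_zero_of_mem_Icc ⟨by linarith, hah⟩)]
  have ha' : 1/2 ≤ a := hhi ▸ le_gridNode_of_le hh (hhi.symm ▸ hx')
  rcases hx'.eq_or_lt with rfl | hx'
  -- `x = 1/2` is a node, whose cell `[1/2, 1/2 + h]` leaves the zero region
  · rw [le_antisymm hax ha', linInterp_self]
  · have hle : uTP x ≤ linInterp uTP a h x :=
      le_linInterp_of_convexOn convexOn_uTP_Ici ha' (mem_Ici.2 (by linarith)) hh hax hxa.le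
    have hu := uTP_pos_of_half_lt hx'
    rw [sign_pos hu, sign_pos (hu.trans_le hle)]

/-- If `N = 4k+1`, the interpolant `v_N = I_N(u)` has the same sign decomposition as `u`
on `[−1,1]`, and hence `μ_ω(v_N) = 0`. -/
theorem interpolant_sign_sets_and_measure (N k : ℕ) (hk : 0 < k) (hN : N = 4*k + 1) :
    ({x ∈ Set.Icc (-1:ℝ) 1 | vInterp N x < 0} = {x ∈ Set.Icc (-1:ℝ) 1 | uTP x < 0}) ∧
    ({x ∈ Set.Icc (-1:ℝ) 1 | vInterp N x = 0} = {x ∈ Set.Icc (-1:ℝ) 1 | uTP x = 0}) ∧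
    ({x ∈ Set.Icc (-1:ℝ) 1 | 0 < vInterp N x} = {x ∈ Set.Icc (-1:ℝ) 1 | 0 < uTP x}) ∧
    -- the nonlinear measure `μ_ω(v_N)` of the two-phase error identity vanishes
    (8 * (∫ x in {x ∈ Set.Icc (-1:ℝ) 1 | 0 < vInterp N x} ∩
            {x ∈ Set.Icc (-1:ℝ) 1 | uTP x = 0}, |vInterp N x|) +
      8 * (∫ x in {x ∈ Set.Icc (-1:ℝ) 1 | vInterp N x < 0} ∩
            {x ∈ Set.Icc (-1:ℝ) 1 | uTP x = 0}, |vInterp N x|) +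
      (8 + 8) * (∫ x in ({x ∈ Set.Icc (-1:ℝ) 1 | 0 < vInterp N x} ∩
            {x ∈ Set.Icc (-1:ℝ) 1 | uTP x < 0}) ∪
          ({x ∈ Set.Icc (-1:ℝ) 1 | vInterp N x < 0} ∩
            {x ∈ Set.Icc (-1:ℝ) 1 | 0 < uTP x}), |vInterp N x|)) = 0 := by
  subst hN
  have hneg : {x ∈ Icc (-1:ℝ) 1 | vInterp (4 * k + 1) x < 0}
      = {x ∈ Icc (-1:ℝ) 1 | uTP x < 0} :=
    sep_ext_iff.2 fun x _ => by rw [← sign_eq_neg_one_iff, sign_vInterp hk, sign_eq_neg_one_iff]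
  have hzero : {x ∈ Icc (-1:ℝ) 1 | vInterp (4 * k + 1) x = 0}
      = {x ∈ Icc (-1:ℝ) 1 | uTP x = 0} :=
    sep_ext_iff.2 fun x _ => by rw [← sign_eq_zero_iff, sign_vInterp hk, sign_eq_zero_iff]
  have hpos : {x ∈ Icc (-1:ℝ) 1 | 0 < vInterp (4 * k + 1) x}
      = {x ∈ Icc (-1:ℝ) 1 | 0 < uTP x} :=
    sep_ext_iff.2 fun x _ => by rw [← sign_eq_one_iff, sign_vInterp hk, sign_eq_one_iff]
  refine ⟨hneg, hzero, hpos, ?_⟩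
  rw [hneg, hpos, sep_inter_sep_eq_empty fun _ _ h => h.ne',
    sep_inter_sep_eq_empty fun _ _ h => h.ne, sep_inter_sep_eq_empty fun _ _ => lt_asymm,
    sep_inter_sep_eq_empty fun _ _ => lt_asymm]
  simp
end
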